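/- Let 0 < κ₁ < κ₂ < 1, and let U_{κ₁} and U_{κ₂} be odd zero-up ground states for parameters κ₁ and κ₂ respectively. Then U_{κ₁}(x) > U_{κ₂}(x) for every x ∈ (0, π/2]. -/

import Mathlib

open Real MeasureTheory Set

noncomputable section

/-- An odd zero-up ground state for parameter `κ`: a `2π`-periodic, odd, twice
continuously differentiable function `U : ℝ → ℝ` satisfying
`κ² U'' + U − U³ = 0` on `ℝ`, with `U' > 0` on `[0, π/2)` and `U' < 0` on `(π/2, π]`. -/
def IsOddZeroUpGroundState (κ : ℝ) (U : ℝ → ℝ) : Prop :=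
  ContDiff ℝ 2 U ∧
  Function.Periodic U (2 * π) ∧
  (∀ x : ℝ, U (-x) = - U x) ∧
  (∀ x : ℝ, κ ^ 2 * deriv (deriv U) x + U x - U x ^ 3 = 0) ∧
  (∀ x ∈ Set.Ico (0 : ℝ) (π / 2), 0 < deriv U x) ∧
  (∀ x ∈ Set.Ioc (π / 2) π, deriv U x < 0)

/-- The Allen–Cahn energy with diffusion coefficient `κ`. -/
def energy (κ : ℝ) (u : ℝ → ℝ) : ℝ :=
  ∫ x in (-π)..π, (κ ^ 2 / 2 * (deriv u x) ^ 2 + (1 - u x ^ 2) ^ 2 / 4)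

/-- The `L²` norm over one period `(-π, π)`. -/
def L2norm (f : ℝ → ℝ) : ℝ := Real.sqrt (∫ x in (-π)..π, (f x) ^ 2)

/-- The `H¹` norm over one period `(-π, π)`. -/
def H1norm (f : ℝ → ℝ) : ℝ := Real.sqrt (L2norm f ^ 2 + L2norm (deriv f) ^ 2)

/-!
The two ground states are compared through the Wronskian `W = U₂ U₁' - U₂' U₁`. Wherever
`U₁ ≤ U₂` on `(0, π/2)`, the equations give `W' = U₁ U₂ ((1 - U₂²)/κ₂² - (1 - U₁²)/κ₁²) < 0`,
because `0 < U₁ < 1` and `κ₁ < κ₂`. On an interval `[a, b]` where `U₁ ≤ U₂` with contact at `a`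
and at `b` (or `b = π/2`, where both derivatives vanish), the contact conditions force
`W a ≤ 0 ≤ W b`, contradicting this. Such an interval exists as soon as `U₁ < U₂` somewhere, and
also when `U₂ ≤ U₁` with equality at some point.
-/

open Filter Topology

section Calculus

variable {f f' : ℝ → ℝ} {a b : ℝ}

theorem IsMaxOn.deriv_nonpos_of_Icc_left (h : IsMaxOn f (Icc a b) a) (hab : a < b)
    (hf : DifferentiableAt ℝ f a) : deriv f a ≤ 0 := by
  have hcone : b - a ∈ posTangentConeAt (Icc a b) a :=
    sub_mem_posTangentConeAt_of_segment_subset (segment_eq_Icc hab.le ▸ Subset.rfl)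
  have := h.localize.hasFDerivWithinAt_nonpos hf.hasDerivAt.hasDerivWithinAt hcone
  simp only [ContinuousLinearMap.toSpanSingleton_apply, smul_eq_mul] at this
  nlinarith

theorem IsMaxOn.deriv_nonneg_of_Icc_right (h : IsMaxOn f (Icc a b) b) (hab : a < b)
    (hf : DifferentiableAt ℝ f b) : 0 ≤ deriv f b := by
  have hcone : a - b ∈ posTangentConeAt (Icc a b) b :=
    sub_mem_posTangentConeAt_of_segment_subset (by rw [segment_symm, segment_eq_Icc hab.le])
  have := h.localize.hasFDerivWithinAt_nonpos hf.hasDerivAt.hasDerivWithinAt hcone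
  simp only [ContinuousLinearMap.toSpanSingleton_apply, smul_eq_mul] at this
  nlinarith

theorem eq_zero_of_abs_deriv_le_mul_abs_self_of_eq_zero_left {K : ℝ}
    (hf : ∀ x ∈ Icc a b, HasDerivAt f (f' x) x) (hb : f b = 0)
    (bound : ∀ x ∈ Icc a b, |f' x| ≤ K * |f x|) : ∀ x ∈ Icc a b, f x = 0 := by
  have hmem {t : ℝ} (ht : t ∈ Icc (-b) (-a)) : -t ∈ Icc a b := ⟨le_neg.1 ht.2, neg_le.1 ht.1⟩
  have hf_neg (t : ℝ) (ht : t ∈ Icc (-b) (-a)) : HasDerivAt (fun s => f (-s)) (-f' (-t)) t := by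
    simpa [Function.comp_def] using (hf (-t) (hmem ht)).comp t (hasDerivAt_neg t)
  have key := eq_zero_of_abs_deriv_le_mul_abs_self_of_eq_zero_right (K := K)
    (fun t ht => (hf_neg t ht).continuousAt.continuousWithinAt)
    (fun t ht => (hf_neg t (Ico_subset_Icc_self ht)).hasDerivWithinAt) (by simpa using hb)
    (fun t ht => by simpa using bound (-t) (hmem (Ico_subset_Icc_self ht)))
  intro x hx
  simpa using key (-x) ⟨neg_le_neg hx.2, neg_le_neg hx.1⟩

end Calculus

section Crossings

variable {f : ℝ → ℝ} {a b x₀ : ℝ}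

theorem ContinuousOn.exists_zero_nonneg_Icc_left (hf : ContinuousOn f (Icc a x₀))
    (hax₀ : a ≤ x₀) (ha : f a ≤ 0) (hx₀ : 0 < f x₀) :
    ∃ c ∈ Ico a x₀, f c = 0 ∧ ∀ x ∈ Icc c x₀, 0 ≤ f x := by
  set A := Icc a x₀ ∩ f ⁻¹' Iic 0
  have hAbdd : BddAbove A := bddAbove_Icc.mono inter_subset_left
  have hcA : sSup A ∈ A := (hf.preimage_isClosed_of_isClosed isClosed_Icc isClosed_Iic).csSup_mem
    ⟨a, ⟨left_mem_Icc.2 hax₀, ha⟩⟩ hAbdd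
  have hle_sSup {x : ℝ} (hx : x ∈ Icc (sSup A) x₀) (hfx : f x ≤ 0) : x = sSup A :=
    le_antisymm (le_csSup hAbdd ⟨⟨hcA.1.1.trans hx.1, hx.2⟩, hfx⟩) hx.1
  obtain ⟨c, hc, hfc⟩ : ∃ c ∈ Icc (sSup A) x₀, f c = 0 :=
    intermediate_value_Icc hcA.1.2 (hf.mono (Icc_subset_Icc_left hcA.1.1)) ⟨hcA.2, hx₀.le⟩
  obtain rfl := hle_sSup hc hfc.le
  refine ⟨sSup A, ⟨hcA.1.1, hc.2.lt_of_ne (by rintro h; rw [h] at hfc; linarith)⟩, hfc,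
    fun x hx => ?_⟩
  by_contra! hfx
  rw [hle_sSup hx hfx.le] at hfx
  linarith

theorem ContinuousOn.exists_nonneg_Icc_right (hf : ContinuousOn f (Icc x₀ b))
    (hx₀b : x₀ ≤ b) (hx₀ : 0 < f x₀) :
    ∃ c ∈ Icc x₀ b, (f c = 0 ∨ c = b) ∧ ∀ x ∈ Icc x₀ c, 0 ≤ f x := by
  by_cases hB : (Icc x₀ b ∩ f ⁻¹' Iic 0).Nonempty
  · set B := Icc x₀ b ∩ f ⁻¹' Iic 0
    have hBbdd : BddBelow B := bddBelow_Icc.mono inter_subset_left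
    have hcB : sInf B ∈ B :=
      (hf.preimage_isClosed_of_isClosed isClosed_Icc isClosed_Iic).csInf_mem hB hBbdd
    have hsInf_le {x : ℝ} (hx : x ∈ Icc x₀ (sInf B)) (hfx : f x ≤ 0) : x = sInf B :=
      le_antisymm hx.2 (csInf_le hBbdd ⟨⟨hx.1, hx.2.trans hcB.1.2⟩, hfx⟩)
    obtain ⟨c, hc, hfc⟩ : ∃ c ∈ Icc x₀ (sInf B), f c = 0 :=
      intermediate_value_Icc' hcB.1.1 (hf.mono (Icc_subset_Icc_right hcB.1.2)) ⟨hcB.2, hx₀.le⟩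
    obtain rfl := hsInf_le hc hfc.le
    refine ⟨sInf B, hcB.1, Or.inl hfc, fun x hx => ?_⟩
    by_contra! hfx
    rw [hsInf_le hx hfx.le] at hfx
    linarith
  · refine ⟨b, right_mem_Icc.2 hx₀b, Or.inr rfl, fun x hx => ?_⟩
    by_contra! hfx
    exact hB ⟨x, hx, hfx.le⟩

end Crossings

def wronskian (f g : ℝ → ℝ) (x : ℝ) : ℝ := f x * deriv g x - deriv f x * g x

theorem hasDerivAt_wronskian {f g : ℝ → ℝ} (hf : ContDiff ℝ 2 f) (hg : ContDiff ℝ 2 g) (x : ℝ) :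
    HasDerivAt (wronskian f g) (f x * deriv (deriv g) x - deriv (deriv f) x * g x) x := by
  have hf₁ := (hf.differentiable two_ne_zero x).hasDerivAt
  have hg₁ := (hg.differentiable two_ne_zero x).hasDerivAt
  have hf₂ := (hf.differentiable_deriv_two x).hasDerivAt
  have hg₂ := (hg.differentiable_deriv_two x).hasDerivAt
  exact ((hf₁.mul hg₂).sub (hf₂.mul hg₁)).congr_deriv (by ring)

namespace IsOddZeroUpGroundState

variable {κ : ℝ} {U : ℝ → ℝ} (h : IsOddZeroUpGroundState κ U)
include h

theorem map_zero : U 0 = 0 := by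
  have := h.2.2.1 0
  rw [neg_zero] at this
  linarith

theorem differentiable : Differentiable ℝ U := h.1.differentiable two_ne_zero

theorem continuous : Continuous U := h.1.continuous

theorem differentiable_deriv : Differentiable ℝ (deriv U) := h.1.differentiable_deriv_two

theorem deriv_deriv (hκ : κ ≠ 0) (x : ℝ) : deriv (deriv U) x = (U x ^ 3 - U x) / κ ^ 2 := by
  rw [eq_div_iff (pow_ne_zero 2 hκ)]
  linarith [h.2.2.2.1 x]

theorem deriv_pi_div_two : deriv U (π / 2) = 0 := by
  have hcont := h.1.continuous_deriv one_le_two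
  refine le_antisymm ?_ ?_
  · refine le_of_tendsto (hcont.continuousAt.continuousWithinAt (s := Ioi (π / 2))) ?_
    filter_upwards [Ioo_mem_nhdsGT (half_lt_self pi_pos)] with x hx
    exact (h.2.2.2.2.2 x ⟨hx.1, hx.2.le⟩).le
  · refine ge_of_tendsto (hcont.continuousAt.continuousWithinAt (s := Iio (π / 2))) ?_
    filter_upwards [Ioo_mem_nhdsLT (half_pos pi_pos)] with x hx
    exact (h.2.2.2.2.1 x ⟨hx.1.le, hx.2⟩).le

theorem strictMonoOn : StrictMonoOn U (Icc 0 (π / 2)) :=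
  strictMonoOn_of_deriv_pos (convex_Icc _ _) h.continuous.continuousOn fun x hx => by
    rw [interior_Icc] at hx
    exact h.2.2.2.2.1 x ⟨hx.1.le, hx.2⟩

theorem nonneg {x : ℝ} (hx : x ∈ Icc 0 (π / 2)) : 0 ≤ U x :=
  h.map_zero ▸ h.strictMonoOn.monotoneOn ⟨le_rfl, by positivity⟩ hx hx.1

theorem pos {x : ℝ} (hx : x ∈ Ioc 0 (π / 2)) : 0 < U x :=
  h.map_zero ▸ h.strictMonoOn ⟨le_rfl, by positivity⟩ (Ioc_subset_Icc_self hx) hx.1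

theorem le_apply_pi_div_two {x : ℝ} (hx : x ∈ Icc 0 (π / 2)) : U x ≤ U (π / 2) :=
  h.strictMonoOn.monotoneOn hx ⟨by positivity, le_rfl⟩ hx.2

theorem first_integral (x : ℝ) :
    κ ^ 2 * deriv U x ^ 2 / 2 + U x ^ 2 / 2 - U x ^ 4 / 4
      = U (π / 2) ^ 2 / 2 - U (π / 2) ^ 4 / 4 := by
  set E : ℝ → ℝ := fun y => κ ^ 2 * deriv U y ^ 2 / 2 + U y ^ 2 / 2 - U y ^ 4 / 4
  have hE (y : ℝ) : HasDerivAt E 0 y := by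
    have hU := (h.differentiable y).hasDerivAt
    have hU' := (h.differentiable_deriv y).hasDerivAt
    refine ((((hU'.pow 2).const_mul (κ ^ 2)).div_const 2).add ((hU.pow 2).div_const 2)).sub
      ((hU.pow 4).div_const 4) |>.congr_deriv ?_
    push_cast
    linear_combination deriv U y * h.2.2.2.1 y
  have := is_const_of_deriv_eq_zero (fun y => (hE y).differentiableAt) (fun y => (hE y).deriv)
    x (π / 2)
  simpa [E, h.deriv_pi_div_two] using this

/-- If `M = U (π/2) ≥ 1`, then `U = 1` somewhere in `[0, π/2]`. The first integral gives
`κ² U'² ≤ (1 - U²)² / 2`, hence `|U'| ≤ (1 + M) / κ * |1 - U|` there, so by Grönwall `U ≡ 1` to the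
left of that point, contradicting `U 0 = 0`. -/
theorem apply_pi_div_two_lt_one (hκ : 0 < κ) : U (π / 2) < 1 := by
  by_contra! hM
  set M := U (π / 2)
  obtain ⟨x₁, hx₁, hUx₁⟩ : ∃ x₁ ∈ Icc 0 (π / 2), U x₁ = 1 :=
    intermediate_value_Icc (by positivity) h.continuous.continuousOn ⟨by simp [h.map_zero], hM⟩
  have bound : ∀ x ∈ Icc 0 x₁, |-deriv U x| ≤ (1 + M) / κ * |1 - U x| := by
    intro x hx
    have hx' : x ∈ Icc 0 (π / 2) := ⟨hx.1, hx.2.trans hx₁.2⟩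
    have hU₀ := h.nonneg hx'
    have hUM : U x ≤ M := h.le_apply_pi_div_two hx'
    rw [abs_neg, ← abs_of_pos (by positivity : 0 < (1 + M) / κ), ← abs_mul, ← sq_le_sq,
      mul_pow, div_pow, div_mul_eq_mul_div, le_div_iff₀ (by positivity)]
    calc deriv U x ^ 2 * κ ^ 2 = (1 - U x ^ 2) ^ 2 / 2 - (1 - M ^ 2) ^ 2 / 2 := by
          linarith [h.first_integral x]
      _ ≤ (1 - U x) ^ 2 * (1 + U x) ^ 2 := by nlinarith [sq_nonneg (1 - M ^ 2)]
      _ ≤ (1 + M) ^ 2 * (1 - U x) ^ 2 := by rw [mul_comm]; gcongr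
  have := eq_zero_of_abs_deriv_le_mul_abs_self_of_eq_zero_left
    (fun x _ => (h.differentiable x).hasDerivAt.const_sub 1) (by simp [hUx₁]) bound 0
    ⟨le_rfl, hx₁.1⟩
  simp [h.map_zero] at this

theorem lt_one (hκ : 0 < κ) {x : ℝ} (hx : x ∈ Icc 0 (π / 2)) : U x < 1 :=
  (h.le_apply_pi_div_two hx).trans_lt (h.apply_pi_div_two_lt_one hκ)

end IsOddZeroUpGroundState

section Comparison

variable {κ₁ κ₂ : ℝ} {U₁ U₂ : ℝ → ℝ}

def IsContactInterval (U₁ U₂ : ℝ → ℝ) (a b : ℝ) : Prop :=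
  0 ≤ a ∧ a < b ∧ b ≤ π / 2 ∧ (∀ x ∈ Icc a b, U₁ x ≤ U₂ x) ∧ U₁ a = U₂ a ∧
    (U₁ b = U₂ b ∨ b = π / 2)

theorem wronskian_strictAntiOn (h₁ : IsOddZeroUpGroundState κ₁ U₁)
    (h₂ : IsOddZeroUpGroundState κ₂ U₂) (hκ₁ : 0 < κ₁) (hκ₁₂ : κ₁ < κ₂) {a b : ℝ} (ha : 0 ≤ a)
    (hb : b ≤ π / 2) (hle : ∀ x ∈ Icc a b, U₁ x ≤ U₂ x) :
    StrictAntiOn (wronskian U₂ U₁) (Icc a b) := by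
  have hκ₂ : 0 < κ₂ := hκ₁.trans hκ₁₂
  refine strictAntiOn_of_deriv_neg (convex_Icc a b)
    (fun x _ => (hasDerivAt_wronskian h₂.1 h₁.1 x).continuousAt.continuousWithinAt)
    fun x hx => ?_
  rw [interior_Icc] at hx
  have hu₀ : 0 < U₁ x := h₁.pos ⟨ha.trans_lt hx.1, hx.2.le.trans hb⟩
  have hu₁ : U₁ x < 1 := h₁.lt_one hκ₁ ⟨ha.trans hx.1.le, hx.2.le.trans hb⟩
  have huv : U₁ x ≤ U₂ x := hle x ⟨hx.1.le, hx.2.le⟩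
  rw [(hasDerivAt_wronskian h₂.1 h₁.1 x).deriv, h₁.deriv_deriv hκ₁.ne', h₂.deriv_deriv hκ₂.ne']
  set u := U₁ x
  set v := U₂ x
  have hsplit : v * ((u ^ 3 - u) / κ₁ ^ 2) - (v ^ 3 - v) / κ₂ ^ 2 * u
      = u * v * ((1 - v ^ 2) / κ₂ ^ 2 - (1 - u ^ 2) / κ₁ ^ 2) := by ring
  have hv : (1 - v ^ 2) / κ₂ ^ 2 ≤ (1 - u ^ 2) / κ₂ ^ 2 := by gcongr
  have hκ : (1 - u ^ 2) / κ₂ ^ 2 < (1 - u ^ 2) / κ₁ ^ 2 :=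
    div_lt_div_of_pos_left (by nlinarith) (by positivity) (by gcongr)
  rw [hsplit]
  exact mul_neg_of_pos_of_neg (mul_pos hu₀ (hu₀.trans_le huv)) (by linarith)

theorem not_isContactInterval (h₁ : IsOddZeroUpGroundState κ₁ U₁)
    (h₂ : IsOddZeroUpGroundState κ₂ U₂) (hκ₁ : 0 < κ₁) (hκ₁₂ : κ₁ < κ₂) {a b : ℝ} :
    ¬ IsContactInterval U₁ U₂ a b := by
  rintro ⟨ha, hab, hb, hle, hca, hcb⟩
  set D : ℝ → ℝ := fun x => U₁ x - U₂ x
  have hD (x : ℝ) : deriv D x = deriv U₁ x - deriv U₂ x :=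
    deriv_sub (h₁.differentiable x) (h₂.differentiable x)
  have hDdiff (x : ℝ) : DifferentiableAt ℝ D x :=
    (h₁.differentiable x).sub (h₂.differentiable x)
  have hW_of_eq {x : ℝ} (hx : U₁ x = U₂ x) : wronskian U₂ U₁ x = U₁ x * deriv D x := by
    rw [hD, wronskian, ← hx]
    ring
  have hWa : wronskian U₂ U₁ a ≤ 0 := by
    have hmax : IsMaxOn D (Icc a b) a := fun x hx => by
      simpa [D, hca] using hle x hx
    rw [hW_of_eq hca]
    exact mul_nonpos_of_nonneg_of_nonpos (h₁.nonneg ⟨ha, hab.le.trans hb⟩)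
      (hmax.deriv_nonpos_of_Icc_left hab (hDdiff a))
  have hWb : 0 ≤ wronskian U₂ U₁ b := by
    rcases hcb with hcb | rfl
    · have hmax : IsMaxOn D (Icc a b) b := fun x hx => by
        simpa [D, hcb] using hle x hx
      rw [hW_of_eq hcb]
      exact mul_nonneg (h₁.nonneg ⟨ha.trans hab.le, hb⟩)
        (hmax.deriv_nonneg_of_Icc_right hab (hDdiff b))
    · simp [wronskian, h₁.deriv_pi_div_two, h₂.deriv_pi_div_two]
  have := wronskian_strictAntiOn h₁ h₂ hκ₁ hκ₁₂ ha hb hle (left_mem_Icc.2 hab.le)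
    (right_mem_Icc.2 hab.le) hab
  linarith

theorem exists_isContactInterval_of_lt (h₁ : IsOddZeroUpGroundState κ₁ U₁)
    (h₂ : IsOddZeroUpGroundState κ₂ U₂) {x₀ : ℝ} (hx₀ : x₀ ∈ Ioc 0 (π / 2))
    (hlt : U₁ x₀ < U₂ x₀) : ∃ a b, IsContactInterval U₁ U₂ a b := by
  have hD : Continuous fun x => U₂ x - U₁ x := h₂.continuous.sub h₁.continuous
  obtain ⟨a, ha, hDa, hleft⟩ := hD.continuousOn.exists_zero_nonneg_Icc_left hx₀.1.le
    (by simp [h₁.map_zero, h₂.map_zero]) (sub_pos.2 hlt)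
  obtain ⟨b, hb, hDb, hright⟩ := hD.continuousOn.exists_nonneg_Icc_right hx₀.2 (sub_pos.2 hlt)
  refine ⟨a, b, ha.1, ha.2.trans_le hb.1, hb.2, fun x hx => ?_, (sub_eq_zero.1 hDa).symm,
    hDb.imp_left fun h => (sub_eq_zero.1 h).symm⟩
  rw [← sub_nonneg]
  rcases le_total x x₀ with hxx₀ | hx₀x
  · exact hleft x ⟨hx.1, hxx₀⟩
  · exact hright x ⟨hx₀x, hx.2⟩

/-- At a touching point `U₁ = U₂ = c ∈ (0, 1)` the equations give
`(U₂ - U₁)'' = (c - c³)(κ₁⁻² - κ₂⁻²) > 0`, so `U₂ - U₁ ≤ 0` has a local minimum there and hence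
vanishes on a left neighbourhood. -/
theorem exists_isContactInterval_of_touch (h₁ : IsOddZeroUpGroundState κ₁ U₁)
    (h₂ : IsOddZeroUpGroundState κ₂ U₂) (hκ₁ : 0 < κ₁) (hκ₁₂ : κ₁ < κ₂)
    (hle : ∀ x ∈ Ioc 0 (π / 2), U₂ x ≤ U₁ x) {x₀ : ℝ} (hx₀ : x₀ ∈ Ioc 0 (π / 2))
    (heq : U₂ x₀ = U₁ x₀) : ∃ a, IsContactInterval U₁ U₂ a x₀ := by
  have hκ₂ : 0 < κ₂ := hκ₁.trans hκ₁₂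
  set D : ℝ → ℝ := fun x => U₂ x - U₁ x
  have hD' : deriv D = fun x => deriv U₂ x - deriv U₁ x :=
    funext fun x => deriv_sub (h₂.differentiable x) (h₁.differentiable x)
  have hcrit : deriv D x₀ = 0 := by
    rcases hx₀.2.lt_or_eq with hlt | rfl
    · have hmax : IsLocalMax D x₀ := by
        filter_upwards [Ioo_mem_nhds hx₀.1 hlt] with y hy
        simpa [D, heq] using hle y ⟨hy.1, hy.2.le⟩
      exact hmax.deriv_eq_zero
    · simp [hD', h₁.deriv_pi_div_two, h₂.deriv_pi_div_two]
  have hconvex : 0 < deriv (deriv D) x₀ := by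
    have hc₀ : 0 < U₁ x₀ := h₁.pos hx₀
    have hc₁ : U₁ x₀ < 1 := h₁.lt_one hκ₁ (Ioc_subset_Icc_self hx₀)
    rw [hD', deriv_fun_sub (h₂.differentiable_deriv x₀) (h₁.differentiable_deriv x₀),
      h₁.deriv_deriv hκ₁.ne', h₂.deriv_deriv hκ₂.ne', heq, sub_pos, ← neg_sub (U₁ x₀), neg_div,
      neg_div, neg_lt_neg_iff]
    exact div_lt_div_of_pos_left (by nlinarith [mul_pos hc₀ (sub_pos.2 hc₁)]) (by positivity)
      (by gcongr)
  have hmin : IsLocalMin D x₀ := isLocalMin_of_deriv_deriv_pos hconvex hcrit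
    (h₂.continuous.sub h₁.continuous).continuousAt
  obtain ⟨l, hl, hsub⟩ := exists_Ioc_subset_of_mem_nhds' hmin hx₀.1
  have hEq : ∀ x ∈ Icc ((l + x₀) / 2) x₀, U₁ x = U₂ x := by
    intro x hx
    have hmin_x : D x₀ ≤ D x := hsub ⟨by linarith [hx.1, hl.2], hx.2⟩
    have := hle x ⟨by linarith [hx.1, hl.1, hl.2], hx.2.trans hx₀.2⟩
    simp only [D, heq, sub_self, sub_nonneg] at hmin_x
    linarith
  refine ⟨(l + x₀) / 2, by linarith [hl.1, hx₀.1], by linarith [hl.2], hx₀.2,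
    fun x hx => (hEq x hx).le, hEq _ (left_mem_Icc.2 (by linarith [hl.2])), Or.inl heq.symm⟩

end Comparison

theorem ground_state_pointwise_monotone_general (κ₁ κ₂ : ℝ) (h₁ : 0 < κ₁) (h₁₂ : κ₁ < κ₂)
    (U₁ U₂ : ℝ → ℝ)
    (hU₁ : IsOddZeroUpGroundState κ₁ U₁) (hU₂ : IsOddZeroUpGroundState κ₂ U₂) :
    ∀ x ∈ Set.Ioc (0 : ℝ) (π / 2), U₂ x < U₁ x := by
  intro x hx
  by_contra! hle
  obtain ⟨a, b, hab⟩ : ∃ a b, IsContactInterval U₁ U₂ a b := by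
    by_cases hcross : ∃ x₀ ∈ Ioc 0 (π / 2), U₁ x₀ < U₂ x₀
    · obtain ⟨x₀, hx₀, hlt⟩ := hcross
      exact exists_isContactInterval_of_lt hU₁ hU₂ hx₀ hlt
    · push Not at hcross
      obtain ⟨a, ha⟩ := exists_isContactInterval_of_touch hU₁ hU₂ h₁ h₁₂ hcross hx
        (le_antisymm (hcross x hx) hle)
      exact ⟨a, x, ha⟩
  exact not_isContactInterval hU₁ hU₂ h₁ h₁₂ hab

/-- pointwise monotonicity of the ground state in `κ`:
if `0 < κ₁ < κ₂ < 1` then `U_{κ₁} > U_{κ₂}` on `(0, π/2]`. -/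
theorem ground_state_pointwise_monotone (κ₁ κ₂ : ℝ) (h₁ : 0 < κ₁) (h₁₂ : κ₁ < κ₂)
    (h₂ : κ₂ < 1) (U₁ U₂ : ℝ → ℝ)
    (hU₁ : IsOddZeroUpGroundState κ₁ U₁) (hU₂ : IsOddZeroUpGroundState κ₂ U₂) :
    ∀ x ∈ Set.Ioc (0 : ℝ) (π / 2), U₂ x < U₁ x :=
  ground_state_pointwise_monotone_general κ₁ κ₂ h₁ h₁₂ U₁ U₂ hU₁ hU₂
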